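/- arXiv:2306.07546 — 5 statements merged into one kernel-verified Lean document; each statement's English description precedes it below -/
import Mathlib

section
/- Let α ∈ (1,2), let σ : ℝ → (0,∞) be a measurable function, let μ be the measure on ℝ with density σ(x)^{-α} with respect to Lebesgue measure, and assume I^{σ,α} := ∫_ℝ σ(x)^{-α}|x|^{α-1} dx < ∞. Then the kernel G_X^0(x,y) := (ω_α/2)(|x|^{α-1} + |y|^{α-1} - |x-y|^{α-1}) satisfies ∫_ℝ ∫_ℝ G_X^0(x,y)^2 μ(dx) μ(dy) ≤ (ω_α · I^{σ,α})^2 < ∞; in particular G_X^0 ∈ L²(ℝ×ℝ, μ×μ). -/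
open Real MeasureTheory ENNReal

/-!
Since `0 ≤ α - 1 ≤ 1`, the map `t ↦ t ^ (α - 1)` is subadditive on `[0, ∞)`, so `|x - y| ^ (α - 1)`
is a metric and the triangle inequality gives `0 ≤ G x y ≤ ω · min(|x| ^ (α - 1), |y| ^ (α - 1))`.
Hence `G x y ^ 2 ≤ ω |x| ^ (α - 1) · ω |y| ^ (α - 1)`, and the double integral is at most the
square of `∫ ω |x| ^ (α - 1) dμ = ω I`.
-/

section RpowNorm

variable {p : ℝ}

lemma rpow_le_rpow_add_rpow_of_le_add (hp0 : 0 ≤ p) (hp1 : p ≤ 1) {a b c : ℝ} (ha : 0 ≤ a)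
    (hb : 0 ≤ b) (hc : 0 ≤ c) (h : c ≤ a + b) : c ^ p ≤ a ^ p + b ^ p :=
  (rpow_le_rpow hc h hp0).trans (rpow_add_le_add_rpow ha hb hp0 hp1)

lemma sq_rpow_norm_add_rpow_norm_sub_le {E : Type*} [SeminormedAddCommGroup E] (hp0 : 0 ≤ p)
    (hp1 : p ≤ 1) (x y : E) :
    (‖x‖ ^ p + ‖y‖ ^ p - ‖x - y‖ ^ p) ^ 2 ≤ 4 * (‖x‖ ^ p * ‖y‖ ^ p) := by
  have hx := norm_nonneg x
  have hy := norm_nonneg y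
  have hxy := norm_nonneg (x - y)
  have h_nonneg : ‖x - y‖ ^ p ≤ ‖x‖ ^ p + ‖y‖ ^ p :=
    rpow_le_rpow_add_rpow_of_le_add hp0 hp1 hx hy hxy (norm_sub_le x y)
  have h_le_x : ‖y‖ ^ p ≤ ‖x‖ ^ p + ‖x - y‖ ^ p :=
    rpow_le_rpow_add_rpow_of_le_add hp0 hp1 hx hxy hy (norm_le_norm_add_norm_sub x y)
  have h_le_y : ‖x‖ ^ p ≤ ‖y‖ ^ p + ‖x - y‖ ^ p :=
    rpow_le_rpow_add_rpow_of_le_add hp0 hp1 hy hxy hx (norm_le_norm_add_norm_sub' x y)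
  nlinarith

end RpowNorm

section Integrals

variable {α β : Type*} [MeasurableSpace α] [MeasurableSpace β] {μ : Measure α} {ν : Measure β}

lemma lintegral_lintegral_le_mul_of_le {K : α → β → ℝ≥0∞} {f : α → ℝ≥0∞} {g : β → ℝ≥0∞}
    (hf : AEMeasurable f μ) (hg : AEMeasurable g ν) (hK : ∀ x y, K x y ≤ f x * g y) :
    ∫⁻ x, ∫⁻ y, K x y ∂ν ∂μ ≤ (∫⁻ x, f x ∂μ) * ∫⁻ y, g y ∂ν :=
  (lintegral_mono fun x => lintegral_mono (hK x)).trans_eq (lintegral_lintegral_mul hf hg)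

lemma memLp_two_prod_of_lintegral_lintegral_lt_top [SFinite ν] {F : α × β → ℝ}
    (hF : AEStronglyMeasurable F (μ.prod ν))
    (h : ∫⁻ x, ∫⁻ y, ENNReal.ofReal (F (x, y) ^ 2) ∂ν ∂μ < ∞) : MemLp F 2 (μ.prod ν) := by
  rw [memLp_two_iff_integrable_sq hF]
  refine ⟨hF.pow 2, (hasFiniteIntegral_iff_ofReal (ae_of_all _ fun z => sq_nonneg (F z))).2 ?_⟩
  rwa [lintegral_prod (fun z => ENNReal.ofReal (F z ^ 2)) (hF.pow 2).aemeasurable.ennreal_ofReal]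

lemma lintegral_ofReal_withDensity_ofReal {d g : α → ℝ} (hd : Measurable d) (hg : 0 ≤ g) :
    ∫⁻ x, ENNReal.ofReal (g x) ∂μ.withDensity (fun x => ENNReal.ofReal (d x)) =
      ∫⁻ x, ENNReal.ofReal (d x * g x) ∂μ := by
  rw [lintegral_withDensity_eq_lintegral_mul_non_measurable _ hd.ennreal_ofReal
    (ae_of_all _ fun _ => ofReal_lt_top)]
  simp only [Pi.mul_apply, ofReal_mul' (hg _)]

end Integrals

lemma neg_one_div_cos_mul_Gamma_pos {α : ℝ} (hα : α ∈ Set.Ioo (1 : ℝ) 2) :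
    0 < -1 / (cos (π * α / 2) * Gamma α) := by
  obtain ⟨hα1, hα2⟩ := hα
  have hcos : cos (π * α / 2) < 0 :=
    cos_neg_of_pi_div_two_lt_of_lt (by nlinarith [pi_pos]) (by nlinarith [pi_pos])
  exact div_pos_of_neg_of_neg (by norm_num)
    (mul_neg_of_neg_of_pos hcos (Gamma_pos_of_pos (by linarith)))

theorem stmt_0_general (α : ℝ) (hα : α ∈ Set.Ioo (1 : ℝ) 2)
    (σ : ℝ → ℝ) (hσ_meas : Measurable σ)
    (μ : Measure ℝ) (hμ : μ = volume.withDensity (fun x => ENNReal.ofReal (σ x ^ (-α))))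
    (I : ℝ≥0∞) (hI : I = ∫⁻ x, ENNReal.ofReal (σ x ^ (-α) * |x| ^ (α - 1)))
    (hIfin : I < ⊤)
    (ω : ℝ) (hω : ω = -1 / (Real.cos (π * α / 2) * Real.Gamma α))
    (G : ℝ → ℝ → ℝ)
    (hG : ∀ x y, G x y = ω / 2 * (|x| ^ (α - 1) + |y| ^ (α - 1) - |x - y| ^ (α - 1))) :
    (∫⁻ x, ∫⁻ y, ENNReal.ofReal ((G x y) ^ 2) ∂μ ∂μ ≤ (ENNReal.ofReal ω * I) ^ 2) ∧
    (ENNReal.ofReal ω * I) ^ 2 < ⊤ ∧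
    MemLp (fun p : ℝ × ℝ => G p.1 p.2) 2 (μ.prod μ) := by
  have hω_pos : 0 < ω := hω ▸ neg_one_div_cos_mul_Gamma_pos hα
  have hp0 : 0 ≤ α - 1 := by linarith [hα.1]
  have hp1 : α - 1 ≤ 1 := by linarith [hα.2]
  set f : ℝ → ℝ≥0∞ := fun x => ENNReal.ofReal ω * ENNReal.ofReal (|x| ^ (α - 1)) with hf
  have hf_meas : Measurable f := by fun_prop
  have hf_lintegral : ∫⁻ x, f x ∂μ = ENNReal.ofReal ω * I := by
    rw [lintegral_const_mul _ (by fun_prop), hμ, hI,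
      lintegral_ofReal_withDensity_ofReal (by fun_prop) fun x => by positivity]
  have hG_sq_le : ∀ x y, ENNReal.ofReal (G x y ^ 2) ≤ f x * f y := by
    intro x y
    have hk := sq_rpow_norm_add_rpow_norm_sub_le hp0 hp1 x y
    simp only [Real.norm_eq_abs] at hk
    simp only [hf]
    rw [← ofReal_mul hω_pos.le, ← ofReal_mul hω_pos.le, ← ofReal_mul (by positivity), hG]
    exact ofReal_le_ofReal (by nlinarith [mul_le_mul_of_nonneg_left hk (sq_nonneg ω)])
  have hbound : ∫⁻ x, ∫⁻ y, ENNReal.ofReal (G x y ^ 2) ∂μ ∂μ ≤ (ENNReal.ofReal ω * I) ^ 2 := by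
    calc _ ≤ (∫⁻ x, f x ∂μ) * ∫⁻ y, f y ∂μ :=
          lintegral_lintegral_le_mul_of_le hf_meas.aemeasurable hf_meas.aemeasurable hG_sq_le
      _ = _ := by rw [hf_lintegral, sq]
  have hfin : (ENNReal.ofReal ω * I) ^ 2 < ⊤ := pow_lt_top (mul_lt_top ofReal_lt_top hIfin)
  have hG_meas : Measurable fun p : ℝ × ℝ => G p.1 p.2 := by
    simp only [hG]
    fun_prop
  subst hμ
  exact ⟨hbound, hfin, memLp_two_prod_of_lintegral_lintegral_lt_top hG_meas.aestronglyMeasurable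
    (hbound.trans_lt hfin)⟩

/-- Let `α ∈ (1,2)`, `σ : ℝ → (0,∞)` measurable, `μ` the measure on `ℝ`
with density `σ(x)^(-α)` w.r.t. Lebesgue measure, and assume
`I = ∫ σ(x)^(-α) |x|^(α-1) dx < ∞`. Then the kernel
`G_X^0(x,y) = (ω_α/2)(|x|^(α-1) + |y|^(α-1) - |x-y|^(α-1))` satisfies
`∫∫ G_X^0(x,y)^2 dμ dμ ≤ (ω_α · I)^2 < ∞`; in particular `G_X^0 ∈ L²(ℝ×ℝ, μ×μ)`. -/
theorem stmt_0 (α : ℝ) (hα : α ∈ Set.Ioo (1 : ℝ) 2)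
    (σ : ℝ → ℝ) (hσ_meas : Measurable σ) (hσ_pos : ∀ x, 0 < σ x)
    (μ : Measure ℝ) (hμ : μ = volume.withDensity (fun x => ENNReal.ofReal (σ x ^ (-α))))
    (I : ℝ≥0∞) (hI : I = ∫⁻ x, ENNReal.ofReal (σ x ^ (-α) * |x| ^ (α - 1)))
    (hIfin : I < ⊤)
    (ω : ℝ) (hω : ω = -1 / (Real.cos (π * α / 2) * Real.Gamma α))
    (G : ℝ → ℝ → ℝ)
    (hG : ∀ x y, G x y = ω / 2 * (|x| ^ (α - 1) + |y| ^ (α - 1) - |x - y| ^ (α - 1))) :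
    (∫⁻ x, ∫⁻ y, ENNReal.ofReal ((G x y) ^ 2) ∂μ ∂μ ≤ (ENNReal.ofReal ω * I) ^ 2) ∧
    (ENNReal.ofReal ω * I) ^ 2 < ⊤ ∧
    MemLp (fun p : ℝ × ℝ => G p.1 p.2) 2 (μ.prod μ) :=
  stmt_0_general α hα σ hσ_meas μ hμ I hI hIfin ω hω G hG
end

section
/- Let α ∈ (1,2), let σ : ℝ → (0,∞) be a measurable function, let μ be the measure on ℝ with density σ(x)^{-α} with respect to Lebesgue measure, and assume I^{σ,α} := ∫_ℝ σ(x)^{-α}|x|^{α-1} dx < ∞. Then for every nonnegative measurable function f : ℝ → [0,∞), ∫_ℝ ∫_ℝ G_X^0(x,y) f(y) μ(dy) μ(dx) ≤ ω_α · I^{σ,α} · ∫_ℝ f dμ, where G_X^0(x,y) := (ω_α/2)(|x|^{α-1} + |y|^{α-1} - |x-y|^{α-1}). In particular the Green operator f ↦ ∫ G_X^0(·,y) f(y) μ(dy) is bounded on L¹(ℝ, μ) with operator norm at most ω_α · I^{σ,α}. -/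
open Real MeasureTheory ENNReal

lemma aux_rpow_sub {a b p : ℝ} (ha : 0 ≤ a) (hb : 0 ≤ b) (hp : 0 ≤ p) (hp1 : p ≤ 1) :
    (a + b) ^ p ≤ a ^ p + b ^ p := by
  have h := NNReal.rpow_add_le_add_rpow a.toNNReal b.toNNReal hp hp1
  have h2 := NNReal.coe_le_coe.2 h
  simpa [NNReal.coe_rpow, Real.toNNReal_add ha hb, Real.coe_toNNReal, ha, hb,
    Real.coe_toNNReal a ha, Real.coe_toNNReal b hb] using h2

/-- Let `α ∈ (1,2)`, `σ : ℝ → (0,∞)` measurable, `μ` the measure with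
density `σ(x)^(-α)` w.r.t. Lebesgue, `I = ∫ σ(x)^(-α)|x|^(α-1) dx < ∞`. Then for every
nonnegative measurable `f`, `∫∫ G_X^0(x,y) f(y) μ(dy) μ(dx) ≤ ω_α · I · ∫ f dμ`, where
`G_X^0(x,y) = (ω_α/2)(|x|^(α-1) + |y|^(α-1) - |x-y|^(α-1))`.
In particular the Green operator is bounded on `L¹(μ)` with norm at most `ω_α · I`. -/
theorem stmt_5 (α : ℝ) (hα : α ∈ Set.Ioo (1 : ℝ) 2)
    (σ : ℝ → ℝ) (hσ_meas : Measurable σ) (hσ_pos : ∀ x, 0 < σ x)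
    (μ : Measure ℝ) (hμ : μ = volume.withDensity (fun x => ENNReal.ofReal (σ x ^ (-α))))
    (I : ℝ≥0∞) (hI : I = ∫⁻ x, ENNReal.ofReal (σ x ^ (-α) * |x| ^ (α - 1)))
    (hIfin : I < ⊤)
    (ω : ℝ) (hω : ω = -1 / (Real.cos (π * α / 2) * Real.Gamma α))
    (G : ℝ → ℝ → ℝ)
    (hG : ∀ x y, G x y = ω / 2 * (|x| ^ (α - 1) + |y| ^ (α - 1) - |x - y| ^ (α - 1)))
    (f : ℝ → ℝ) (hf_meas : Measurable f) (hf_nonneg : ∀ y, 0 ≤ f y) :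
    ∫⁻ x, ∫⁻ y, ENNReal.ofReal (G x y * f y) ∂μ ∂μ
      ≤ ENNReal.ofReal ω * I * ∫⁻ y, ENNReal.ofReal (f y) ∂μ := by
  obtain ⟨hα1, hα2⟩ := hα
  have hp0 : (0:ℝ) ≤ α - 1 := by linarith
  have hp1 : α - 1 ≤ 1 := by linarith
  -- ω > 0
  have hcos : Real.cos (π * α / 2) < 0 := by
    apply Real.cos_neg_of_pi_div_two_lt_of_lt
    · nlinarith [Real.pi_pos]
    · nlinarith [Real.pi_pos]
  have hΓ : 0 < Real.Gamma α := Real.Gamma_pos_of_pos (by linarith)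
  have hω_pos : 0 < ω := by
    rw [hω]
    apply div_pos_of_neg_of_neg (by norm_num)
    exact mul_neg_of_neg_of_pos hcos hΓ
  -- pointwise bound G x y ≤ ω |x|^(α-1)
  have hGle : ∀ x y, G x y ≤ ω * |x| ^ (α - 1) := by
    intro x y
    rw [hG]
    have h1 : |y| ^ (α - 1) ≤ |x - y| ^ (α - 1) + |x| ^ (α - 1) := by
      have hy : |y| ≤ |x - y| + |x| := by
        have := abs_sub_abs_le_abs_sub y x
        have h2 : |y - x| = |x - y| := abs_sub_comm y x
        linarith [abs_sub_abs_le_abs_sub y x, abs_sub_comm y x ▸ (le_refl (|y - x|))]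
      calc |y| ^ (α - 1) ≤ (|x - y| + |x|) ^ (α - 1) :=
            Real.rpow_le_rpow (abs_nonneg _) hy hp0
        _ ≤ |x - y| ^ (α - 1) + |x| ^ (α - 1) :=
            aux_rpow_sub (abs_nonneg _) (abs_nonneg _) hp0 hp1
    nlinarith [hω_pos.le]
  have hbase : ∀ x, 0 ≤ ω * |x| ^ (α - 1) := fun x =>
    mul_nonneg hω_pos.le (Real.rpow_nonneg (abs_nonneg _) _)
  -- first step: bound the inner integrand
  have step1 : ∀ x y, ENNReal.ofReal (G x y * f y)
      ≤ ENNReal.ofReal (ω * |x| ^ (α - 1)) * ENNReal.ofReal (f y) := by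
    intro x y
    rw [← ENNReal.ofReal_mul (hbase x)]
    exact ENNReal.ofReal_le_ofReal (mul_le_mul_of_nonneg_right (hGle x y) (hf_nonneg y))
  have habs : Measurable fun x : ℝ => ω * |x| ^ (α - 1) :=
    measurable_const.mul (measurable_id.abs.pow measurable_const)
  have hfm : Measurable fun y => ENNReal.ofReal (f y) := hf_meas.ennreal_ofReal
  calc ∫⁻ x, ∫⁻ y, ENNReal.ofReal (G x y * f y) ∂μ ∂μ
      ≤ ∫⁻ x, ∫⁻ y, ENNReal.ofReal (ω * |x| ^ (α - 1)) * ENNReal.ofReal (f y) ∂μ ∂μ :=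
        lintegral_mono fun x => lintegral_mono fun y => step1 x y
    _ = ∫⁻ x, ENNReal.ofReal (ω * |x| ^ (α - 1)) * ∫⁻ y, ENNReal.ofReal (f y) ∂μ ∂μ := by
        congr 1; ext x; exact lintegral_const_mul _ hfm
    _ = (∫⁻ x, ENNReal.ofReal (ω * |x| ^ (α - 1)) ∂μ) * ∫⁻ y, ENNReal.ofReal (f y) ∂μ :=
        lintegral_mul_const _ habs.ennreal_ofReal
    _ = ENNReal.ofReal ω * I * ∫⁻ y, ENNReal.ofReal (f y) ∂μ := by
        congr 1
        rw [hμ, lintegral_withDensity_eq_lintegral_mul _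
          (hσ_meas.pow measurable_const).ennreal_ofReal habs.ennreal_ofReal, hI]
        have : ∀ x : ℝ, ((fun x => ENNReal.ofReal (σ x ^ (-α))) *
            fun x => ENNReal.ofReal (ω * |x| ^ (α - 1))) x
            = ENNReal.ofReal ω * ENNReal.ofReal (σ x ^ (-α) * |x| ^ (α - 1)) := by
          intro x
          have hσnn : 0 ≤ σ x ^ (-α) := Real.rpow_nonneg (hσ_pos x).le _
          simp only [Pi.mul_apply]
          rw [← ENNReal.ofReal_mul hσnn, ← ENNReal.ofReal_mul hω_pos.le]
          ring_nf
        rw [lintegral_congr this]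
        exact lintegral_const_mul _
          ((hσ_meas.pow measurable_const).mul
            (measurable_abs.pow measurable_const)).ennreal_ofReal
end

section
/- Let (Ω, ℱ, P) be a probability space, let T : Ω → [0, ∞] be a random variable, let λ > 0, and let ε ∈ [0, e^{-λ}). If P(T > n) ≤ ε^n for every natural number n ≥ 1, then E[e^{λT}] ≤ λ e^{λ} / (1 - e^{λ} ε) + 1; in particular E[e^{λT}] < ∞. -/
/-!
Bound `e^{λt}` by `1 + ∑_{n < t} λ e^{λ(n+1)}`, a discrete form of
`e^{λt} = 1 + ∫₀^t λ e^{λs} ds` (each increment `e^{λ(n+1)} - e^{λn}` is at most `λ e^{λ(n+1)}`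
since `1 - e^{-λ} ≤ λ`). Integrating, `E[e^{λT}] ≤ 1 + ∑ₙ λ e^{λ(n+1)} P(T > n)`, and the tail bound
`P(T > n) ≤ εⁿ` turns the series into `λ e^λ ∑ₙ (e^λ ε)ⁿ = λ e^λ / (1 - e^λ ε)`.
The same tail bound makes `{T = ∞}` null.
-/

open Real MeasureTheory ENNReal

lemma exp_mul_natCast_le_one_add_sum (l : ℝ) (N : ℕ) :
    exp (l * N) ≤ 1 + ∑ n ∈ Finset.range N, l * exp (l * (n + 1)) := by
  induction N with
  | zero => simp
  | succ k ih =>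
    have hsplit : exp (l * k) = exp (-l) * exp (l * (k + 1)) := by
      rw [← exp_add]; ring_nf
    have hincr : exp (l * (k + 1)) - exp (l * k) ≤ l * exp (l * (k + 1)) := by
      nlinarith [add_one_le_exp (-l), exp_pos (l * (k + 1))]
    rw [Finset.sum_range_succ]
    push_cast
    linarith

lemma ofReal_exp_mul_toReal_le {l : ℝ} (hl : 0 ≤ l) {t : ℝ≥0∞} (ht : t ≠ ⊤) :
    ENNReal.ofReal (exp (l * t.toReal)) ≤
      1 + ∑' n : ℕ, if (n : ℝ≥0∞) < t then ENNReal.ofReal (l * exp (l * (n + 1))) else 0 := by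
  set N := ⌈t.toReal⌉₊
  have hterm_nonneg (n : ℕ) : 0 ≤ l * exp (l * (n + 1)) := by positivity
  have hlt (n : ℕ) (hn : n ∈ Finset.range N) : (n : ℝ≥0∞) < t := by
    rw [← ENNReal.toReal_lt_toReal (natCast_ne_top n) ht, toReal_natCast]
    exact Nat.lt_ceil.mp (Finset.mem_range.mp hn)
  calc ENNReal.ofReal (exp (l * t.toReal))
      ≤ ENNReal.ofReal (1 + ∑ n ∈ Finset.range N, l * exp (l * (n + 1))) := by
        refine ofReal_le_ofReal ((exp_le_exp.mpr ?_).trans (exp_mul_natCast_le_one_add_sum l N))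
        exact mul_le_mul_of_nonneg_left (Nat.le_ceil _) hl
    _ = 1 + ∑ n ∈ Finset.range N, ENNReal.ofReal (l * exp (l * (n + 1))) := by
        rw [ofReal_add zero_le_one (Finset.sum_nonneg fun n _ => hterm_nonneg n), ofReal_one,
          ofReal_sum_of_nonneg fun n _ => hterm_nonneg n]
    _ = 1 + ∑ n ∈ Finset.range N,
          if (n : ℝ≥0∞) < t then ENNReal.ofReal (l * exp (l * (n + 1))) else 0 := by
        congr 1
        exact Finset.sum_congr rfl fun n hn => (if_pos (hlt n hn)).symm
    _ ≤ _ := by gcongr; exact ENNReal.sum_le_tsum _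

lemma lintegral_ofReal_exp_mul_toReal_le {Ω : Type*} [MeasurableSpace Ω] (μ : Measure Ω)
    {T : Ω → ℝ≥0∞} (hT : Measurable T) (hT_fin : ∀ᵐ ω ∂μ, T ω ≠ ⊤) {l : ℝ} (hl : 0 ≤ l) :
    ∫⁻ ω, ENNReal.ofReal (exp (l * (T ω).toReal)) ∂μ ≤
      μ Set.univ + ∑' n : ℕ, ENNReal.ofReal (l * exp (l * (n + 1))) * μ {ω | (n : ℝ≥0∞) < T ω} := by
  have hset (n : ℕ) : MeasurableSet {ω | (n : ℝ≥0∞) < T ω} := measurableSet_lt measurable_const hT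
  calc ∫⁻ ω, ENNReal.ofReal (exp (l * (T ω).toReal)) ∂μ
      ≤ ∫⁻ ω, 1 + ∑' n : ℕ, {ω | (n : ℝ≥0∞) < T ω}.indicator
          (fun _ => ENNReal.ofReal (l * exp (l * (n + 1)))) ω ∂μ :=
        lintegral_mono_ae <| hT_fin.mono fun ω hω => by
          simpa only [Set.indicator_apply, Set.mem_ofPred_eq] using ofReal_exp_mul_toReal_le hl hω
    _ = μ Set.univ + ∑' n : ℕ, ENNReal.ofReal (l * exp (l * (n + 1))) * μ {ω | (n : ℝ≥0∞) < T ω} := by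
        rw [lintegral_add_left measurable_const, lintegral_one,
          lintegral_tsum fun n => (measurable_const.indicator (hset n)).aemeasurable]
        simp_rw [lintegral_indicator_const (hset _)]

lemma ae_ne_top_of_measure_lt_le_pow {Ω : Type*} [MeasurableSpace Ω] {μ : Measure Ω}
    {T : Ω → ℝ≥0∞} {ε : ℝ} (hε0 : 0 ≤ ε) (hε1 : ε < 1)
    (htail : ∀ n : ℕ, μ {ω | (n : ℝ≥0∞) < T ω} ≤ ENNReal.ofReal (ε ^ n)) :
    ∀ᵐ ω ∂μ, T ω ≠ ⊤ := by
  have hle (n : ℕ) : μ {ω | T ω = ⊤} ≤ ENNReal.ofReal (ε ^ n) :=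
    (measure_mono fun ω (hω : T ω = ⊤) =>
      show (n : ℝ≥0∞) < T ω from hω ▸ natCast_lt_top n).trans (htail n)
  have hlim : Filter.Tendsto (fun n : ℕ => ENNReal.ofReal (ε ^ n)) Filter.atTop (nhds 0) := by
    simpa using ENNReal.tendsto_ofReal (tendsto_pow_atTop_nhds_zero_of_lt_one hε0 hε1)
  simpa [ae_iff] using ge_of_tendsto' hlim hle

lemma tsum_ofReal_mul_exp_mul_le {l ε : ℝ} (hl : 0 ≤ l) (hε0 : 0 ≤ ε) (hq : exp l * ε < 1)
    {p : ℕ → ℝ≥0∞} (hp : ∀ n, p n ≤ ENNReal.ofReal (ε ^ n)) :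
    ∑' n : ℕ, ENNReal.ofReal (l * exp (l * (n + 1))) * p n ≤
      ENNReal.ofReal (l * exp l / (1 - exp l * ε)) := by
  have hq0 : 0 ≤ exp l * ε := by positivity
  have hterm (n : ℕ) : l * exp (l * (n + 1)) * ε ^ n = l * exp l * (exp l * ε) ^ n := by
    rw [show l * (n + 1) = n * l + l by ring, exp_add, exp_nat_mul, mul_pow]; ring
  calc ∑' n : ℕ, ENNReal.ofReal (l * exp (l * (n + 1))) * p n
      ≤ ∑' n : ℕ, ENNReal.ofReal (l * exp l * (exp l * ε) ^ n) := by
        refine ENNReal.tsum_le_tsum fun n => ?_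
        rw [← hterm, ofReal_mul (p := l * exp (l * (n + 1))) (by positivity)]
        gcongr
        exact hp n
    _ = ENNReal.ofReal (∑' n : ℕ, l * exp l * (exp l * ε) ^ n) :=
        (ofReal_tsum_of_nonneg (fun n => by positivity)
          ((summable_geometric_of_lt_one hq0 hq).mul_left _)).symm
    _ = ENNReal.ofReal (l * exp l / (1 - exp l * ε)) := by
        rw [tsum_mul_left, tsum_geometric_of_lt_one hq0 hq, div_eq_mul_inv]

/-- Let `(Ω, ℱ, P)` be a probability space, `T : Ω → [0,∞]` a random
variable, `λ > 0`, `ε ∈ [0, e^(-λ))`. If `P(T > n) ≤ ε^n` for all `n ≥ 1`, then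
`E[e^(λT)] ≤ λ e^λ / (1 - e^λ ε) + 1`; in particular the exponential moment is finite.
Here `e^(λT)` is interpreted as `+∞` on `{T = ∞}`. -/
theorem stmt_6 {Ω : Type*} [MeasurableSpace Ω] (P : Measure Ω) [IsProbabilityMeasure P]
    (T : Ω → ℝ≥0∞) (hT : Measurable T)
    (l : ℝ) (hl : 0 < l) (ε : ℝ) (hε0 : 0 ≤ ε) (hε1 : ε < Real.exp (-l))
    (htail : ∀ n : ℕ, 1 ≤ n → P {ω | (n : ℝ≥0∞) < T ω} ≤ ENNReal.ofReal (ε ^ n)) :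
    (∫⁻ ω, (if T ω = ⊤ then ⊤ else ENNReal.ofReal (Real.exp (l * (T ω).toReal))) ∂P)
      ≤ ENNReal.ofReal (l * Real.exp l / (1 - Real.exp l * ε) + 1) ∧
    (∫⁻ ω, (if T ω = ⊤ then ⊤ else ENNReal.ofReal (Real.exp (l * (T ω).toReal))) ∂P) < ⊤ := by
  have hq : exp l * ε < 1 := by
    simpa [← exp_add] using mul_lt_mul_of_pos_left hε1 (exp_pos l)
  have htail₀ (n : ℕ) : P {ω | (n : ℝ≥0∞) < T ω} ≤ ENNReal.ofReal (ε ^ n) := by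
    rcases n.eq_zero_or_pos with rfl | hn
    · simpa using prob_le_one
    · exact htail n hn
  have hT_fin : ∀ᵐ ω ∂P, T ω ≠ ⊤ :=
    ae_ne_top_of_measure_lt_le_pow hε0 (hε1.trans_le (exp_le_one_iff.mpr (by linarith))) htail₀
  have hbound : (∫⁻ ω, (if T ω = ⊤ then ⊤ else ENNReal.ofReal (exp (l * (T ω).toReal))) ∂P)
      ≤ ENNReal.ofReal (l * exp l / (1 - exp l * ε) + 1) :=
    calc (∫⁻ ω, (if T ω = ⊤ then ⊤ else ENNReal.ofReal (exp (l * (T ω).toReal))) ∂P)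
        = ∫⁻ ω, ENNReal.ofReal (exp (l * (T ω).toReal)) ∂P :=
          lintegral_congr_ae (hT_fin.mono fun ω hω => if_neg hω)
      _ ≤ P Set.univ + ∑' n : ℕ,
            ENNReal.ofReal (l * exp (l * (n + 1))) * P {ω | (n : ℝ≥0∞) < T ω} :=
          lintegral_ofReal_exp_mul_toReal_le P hT hT_fin hl.le
      _ ≤ 1 + ENNReal.ofReal (l * exp l / (1 - exp l * ε)) := by
          rw [measure_univ]
          gcongr
          exact tsum_ofReal_mul_exp_mul_le hl.le hε0 hq htail₀
      _ = ENNReal.ofReal (l * exp l / (1 - exp l * ε) + 1) := by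
          rw [add_comm, ofReal_add (by have := sub_pos.mpr hq; positivity) zero_le_one, ofReal_one]
  exact ⟨hbound, hbound.trans_lt ofReal_lt_top⟩
end

section
/- Let α ∈ (1,2), let μ be a finite measure on ℝ, and let g : ℝ → [0,∞) be μ-integrable. Then the function F(x) := ∫_ℝ (|x|^{α-1} + |y|^{α-1} - |x-y|^{α-1}) g(y) μ(dy) is finite and continuous at every point x ≠ 0. -/
open Real MeasureTheory

lemma rpow_add_le_add_rpow_real {a b : ℝ} (ha : 0 ≤ a) (hb : 0 ≤ b) {p : ℝ}
    (hp0 : 0 ≤ p) (hp1 : p ≤ 1) : (a + b) ^ p ≤ a ^ p + b ^ p := by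
  have := NNReal.rpow_add_le_add_rpow ⟨a, ha⟩ ⟨b, hb⟩ hp0 hp1
  have h2 := NNReal.coe_le_coe.mpr this
  push_cast [NNReal.coe_rpow] at h2
  exact h2

/-- kernel bounds: 0 ≤ K(x,y) ≤ 2|x|^p -/
lemma kernel_bounds (p : ℝ) (hp0 : 0 ≤ p) (hp1 : p ≤ 1) (x y : ℝ) :
    0 ≤ |x| ^ p + |y| ^ p - |x - y| ^ p ∧
    |x| ^ p + |y| ^ p - |x - y| ^ p ≤ 2 * |x| ^ p := by
  constructor
  · have h1 : |x - y| ^ p ≤ (|x| + |y|) ^ p :=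
      Real.rpow_le_rpow (abs_nonneg _) (abs_sub _ _) hp0
    have h2 : (|x| + |y|) ^ p ≤ |x| ^ p + |y| ^ p :=
      rpow_add_le_add_rpow_real (abs_nonneg _) (abs_nonneg _) hp0 hp1
    linarith
  · have habs : |y| ≤ |x - y| + |x| := by
      have h := abs_add_le (y - x) x
      simp only [sub_add_cancel] at h
      rw [abs_sub_comm y x] at h
      exact h
    have h1 : |y| ^ p ≤ (|x - y| + |x|) ^ p :=
      Real.rpow_le_rpow (abs_nonneg _) habs hp0
    have h2 : (|x - y| + |x|) ^ p ≤ |x - y| ^ p + |x| ^ p :=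
      rpow_add_le_add_rpow_real (abs_nonneg _) (abs_nonneg _) hp0 hp1
    linarith

/-- Let `α ∈ (1,2)`, `μ` a finite measure on `ℝ`, and `g : ℝ → [0,∞)`
`μ`-integrable. Then `F(x) = ∫ (|x|^(α-1) + |y|^(α-1) - |x-y|^(α-1)) g(y) μ(dy)`
is finite (the integrand is integrable) and continuous at every point `x ≠ 0`. -/
theorem stmt_7 (α : ℝ) (hα : α ∈ Set.Ioo (1 : ℝ) 2)
    (μ : Measure ℝ) [IsFiniteMeasure μ]
    (g : ℝ → ℝ) (hg_nonneg : ∀ y, 0 ≤ g y) (hg_int : Integrable g μ)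
    (x : ℝ) (hx : x ≠ 0) :
    Integrable (fun y => (|x| ^ (α - 1) + |y| ^ (α - 1) - |x - y| ^ (α - 1)) * g y) μ ∧
    ContinuousAt
      (fun x' => ∫ y, (|x'| ^ (α - 1) + |y| ^ (α - 1) - |x' - y| ^ (α - 1)) * g y ∂μ)
      x := by
  obtain ⟨hα1, hα2⟩ := hα
  set p := α - 1 with hp
  have hp0 : 0 ≤ p := by simp [hp]; linarith
  have hp1 : p ≤ 1 := by simp [hp]; linarith
  -- measurability and integrability for every x'
  have hmeas : ∀ x' : ℝ, AEStronglyMeasurable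
      (fun y => (|x'| ^ p + |y| ^ p - |x' - y| ^ p) * g y) μ := by
    intro x'
    have hc : Continuous (fun y : ℝ => |x'| ^ p + |y| ^ p - |x' - y| ^ p) := by
      apply Continuous.sub
      · exact continuous_const.add ((Real.continuous_rpow_const hp0).comp continuous_abs)
      · exact (Real.continuous_rpow_const hp0).comp
          (continuous_abs.comp (continuous_const.sub continuous_id))
    exact hc.aestronglyMeasurable.mul hg_int.aestronglyMeasurable
  have hint : ∀ x' : ℝ, Integrable
      (fun y => (|x'| ^ p + |y| ^ p - |x' - y| ^ p) * g y) μ := by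
    intro x'
    refine Integrable.mono' (hg_int.const_mul (2 * |x'| ^ p)) (hmeas x') ?_
    filter_upwards with y
    obtain ⟨hk0, hk2⟩ := kernel_bounds p hp0 hp1 x' y
    rw [Real.norm_eq_abs, abs_of_nonneg (mul_nonneg hk0 (hg_nonneg y))]
    exact mul_le_mul_of_nonneg_right hk2 (hg_nonneg y)
  refine ⟨hint x, ?_⟩
  apply continuousAt_of_dominated (bound := fun y => 2 * (|x| + 1) ^ p * g y)
  · exact Filter.Eventually.of_forall hmeas
  · have hball : ∀ᶠ x' in nhds x, x' ∈ Metric.ball x 1 := Metric.ball_mem_nhds x one_pos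
    filter_upwards [hball] with x' hx'
    filter_upwards with y
    obtain ⟨hk0, hk2⟩ := kernel_bounds p hp0 hp1 x' y
    rw [Real.norm_eq_abs, abs_of_nonneg (mul_nonneg hk0 (hg_nonneg y))]
    have habs : |x'| ≤ |x| + 1 := by
      have : |x' - x| < 1 := by simpa [Real.dist_eq] using hx'
      calc |x'| = |x + (x' - x)| := by ring_nf
        _ ≤ |x| + |x' - x| := abs_add_le _ _
        _ ≤ |x| + 1 := by linarith
    have hr : |x'| ^ p ≤ (|x| + 1) ^ p := Real.rpow_le_rpow (abs_nonneg _) habs hp0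
    have : |x'| ^ p + |y| ^ p - |x' - y| ^ p ≤ 2 * (|x| + 1) ^ p := by linarith
    exact mul_le_mul_of_nonneg_right this (hg_nonneg y)
  · exact (hg_int.const_mul _)
  · filter_upwards with y
    apply ContinuousAt.mul _ continuousAt_const
    apply ContinuousAt.sub
    · apply ContinuousAt.add _ continuousAt_const
      exact (Real.continuousAt_rpow_const _ _ (Or.inr hp0)).comp continuous_abs.continuousAt
    · exact (Real.continuousAt_rpow_const _ _ (Or.inr hp0)).comp
        ((continuous_abs.comp (continuous_id.sub continuous_const)).continuousAt)
end

section
/- Let α ∈ (1,2) and let f : ℝ → ℝ be measurable. Suppose that the set {(x,y) ∈ ℝ² : f(x)·f(y) < 0} has strictly positive two-dimensional Lebesgue measure, and that ∬_{ℝ×ℝ} (|f(x)| - |f(y)|)² |x-y|^{-1-α} dx dy < ∞. Then ∬_{ℝ×ℝ} (f(x) - f(y))² |x-y|^{-1-α} dx dy > ∬_{ℝ×ℝ} (|f(x)| - |f(y)|)² |x-y|^{-1-α} dx dy. -/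
open Real MeasureTheory ENNReal

/-- Let `α ∈ (1,2)` and `f : ℝ → ℝ` measurable. Suppose the set
`{(x,y) : f(x)·f(y) < 0}` has strictly positive two-dimensional Lebesgue measure, and
`∬ (|f x| - |f y|)² |x-y|^(-1-α) dx dy < ∞`. Then
`∬ (f x - f y)² |x-y|^(-1-α) dx dy > ∬ (|f x| - |f y|)² |x-y|^(-1-α) dx dy`. -/
theorem stmt_9 (α : ℝ) (hα : α ∈ Set.Ioo (1 : ℝ) 2)
    (f : ℝ → ℝ) (hf : Measurable f)
    (hneg : 0 < volume {p : ℝ × ℝ | f p.1 * f p.2 < 0})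
    (hfin : ∫⁻ x, ∫⁻ y,
        ENNReal.ofReal ((|f x| - |f y|) ^ 2 * |x - y| ^ (-1 - α)) ∂volume ∂volume < ⊤) :
    ∫⁻ x, ∫⁻ y,
        ENNReal.ofReal ((|f x| - |f y|) ^ 2 * |x - y| ^ (-1 - α)) ∂volume ∂volume
      < ∫⁻ x, ∫⁻ y,
        ENNReal.ofReal ((f x - f y) ^ 2 * |x - y| ^ (-1 - α)) ∂volume ∂volume := by
  set A : ℝ × ℝ → ℝ≥0∞ := fun p =>
    ENNReal.ofReal ((|f p.1| - |f p.2|) ^ 2 * |p.1 - p.2| ^ (-1 - α)) with hA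
  set B : ℝ × ℝ → ℝ≥0∞ := fun p =>
    ENNReal.ofReal ((f p.1 - f p.2) ^ 2 * |p.1 - p.2| ^ (-1 - α)) with hB
  have hk : Measurable fun p : ℝ × ℝ => |p.1 - p.2| ^ (-1 - α) :=
    ((measurable_fst.sub measurable_snd).abs).pow measurable_const
  have hmA : Measurable A :=
    ((((hf.comp measurable_fst).abs.sub (hf.comp measurable_snd).abs).pow_const 2).mul
      hk).ennreal_ofReal
  have hmB : Measurable B :=
    ((((hf.comp measurable_fst).sub (hf.comp measurable_snd)).pow_const 2).mul
      hk).ennreal_ofReal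
  have hprod : (volume : Measure (ℝ × ℝ)) = (volume : Measure ℝ).prod volume :=
    Measure.volume_eq_prod _ _
  have hAeq : ∫⁻ p, A p ∂(volume : Measure (ℝ × ℝ)) =
      ∫⁻ x, ∫⁻ y, ENNReal.ofReal ((|f x| - |f y|) ^ 2 * |x - y| ^ (-1 - α)) ∂volume ∂volume := by
    rw [hprod, lintegral_prod _ hmA.aemeasurable]
  have hBeq : ∫⁻ p, B p ∂(volume : Measure (ℝ × ℝ)) =
      ∫⁻ x, ∫⁻ y, ENNReal.ofReal ((f x - f y) ^ 2 * |x - y| ^ (-1 - α)) ∂volume ∂volume := by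
    rw [hprod, lintegral_prod _ hmB.aemeasurable]
  rw [← hAeq, ← hBeq]
  refine lintegral_strict_mono_of_ae_le_of_ae_lt_on hmB.aemeasurable
    (by rw [hAeq]; exact hfin.ne) ?_ (s := {p : ℝ × ℝ | f p.1 * f p.2 < 0}) hneg.ne' ?_
  · refine Filter.Eventually.of_forall fun p => ?_
    apply ENNReal.ofReal_le_ofReal
    have hknn : 0 ≤ |p.1 - p.2| ^ (-1 - α) := rpow_nonneg (abs_nonneg _) _
    apply mul_le_mul_of_nonneg_right _ hknn
    nlinarith [sq_abs (f p.1), sq_abs (f p.2), abs_mul (f p.1) (f p.2),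
      le_abs_self (f p.1 * f p.2), abs_nonneg (f p.1), abs_nonneg (f p.2)]
  · refine Filter.Eventually.of_forall fun p hp => ?_
    have hp' : f p.1 * f p.2 < 0 := hp
    have hne : f p.1 ≠ f p.2 := by
      intro h; rw [h] at hp'; exact absurd hp' (not_lt.2 (mul_self_nonneg _))
    have hxy : p.1 ≠ p.2 := fun h => hne (by rw [h])
    have hkpos : 0 < |p.1 - p.2| ^ (-1 - α) :=
      rpow_pos_of_pos (abs_pos.2 (sub_ne_zero.2 hxy)) _
    refine ENNReal.ofReal_lt_ofReal_iff'.2 ⟨?_, ?_⟩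
    · have hlt : (|f p.1| - |f p.2|) ^ 2 < (f p.1 - f p.2) ^ 2 := by
        have h2 : 0 < |f p.1 * f p.2| - f p.1 * f p.2 := by
          have := abs_pos.2 hp'.ne
          linarith [le_abs_self (f p.1 * f p.2)]
        nlinarith [sq_abs (f p.1), sq_abs (f p.2), abs_mul (f p.1) (f p.2)]
      exact mul_lt_mul_of_pos_right hlt hkpos
    · exact mul_pos (pow_pos (abs_pos.2 (sub_ne_zero.2 hne)) 2 |>.trans_eq (by rw [sq_abs])) hkpos
end
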